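/- arXiv:2108.13903 — 2 statements merged into one kernel-verified Lean document; each statement's English description precedes it below -/
import Mathlib

section
/- Let p(z,w) be a Laurent polynomial with non-negative coefficients and no constant term. For real k > p(1,1), the derivative of the Mahler measure of P = k − p with respect to log k equals u₀(k), where u₀(k) = Σ_{n≥0} k^{-n} · [p(z,w)^n]₀ and [·]₀ denotes the constant term; i.e., d m(P)/d(log k) = u₀(k). -/
open MeasureTheory

/-- Evaluation of a two-variable Laurent polynomial with real coefficients. -/
noncomputable def laurentEval2 (p : AddMonoidAlgebra ℝ (ℤ × ℤ)) (z w : ℂ) : ℂ :=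
  Finsupp.sum p.coeff fun a c => (c : ℂ) * z ^ a.1 * w ^ a.2

/-- The constant term of a two-variable Laurent polynomial. -/
noncomputable def constTerm (p : AddMonoidAlgebra ℝ (ℤ × ℤ)) : ℝ :=
  Finsupp.toFun p.coeff 0

/-- The Mahler measure of a function of two complex variables. -/
noncomputable def mahlerMeasure2 (P : ℂ → ℂ → ℂ) : ℝ :=
  ∫ θ in Set.Ioc (0:ℝ) 1 ×ˢ Set.Ioc (0:ℝ) 1,
    Real.log (‖(P (Complex.exp (2 * Real.pi * Complex.I * (θ.1 : ℂ)))
      (Complex.exp (2 * Real.pi * Complex.I * (θ.2 : ℂ))))‖)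

/-!
On the torus `|p(z, w)| ≤ p(1, 1) < e^L` because the coefficients of `p` are non-negative, so
`log |e^L − p| = L − Σ_{n ≥ 1} Re (e^{-nL} pⁿ) / n` converges uniformly there. Integrating term by
term, and using that the mean of `pⁿ` over the torus is its constant term `[pⁿ]₀`, gives
`m(e^L − p) = L − Σ_{n ≥ 1} [pⁿ]₀ e^{-nL} / n`. Since `|[pⁿ]₀| ≤ p(1, 1)ⁿ`, this series may be
differentiated term by term in `L`, and at `L = log k` the derivative is `Σ_{n ≥ 0} [pⁿ]₀ / kⁿ`.
-/

open Complex

noncomputable def monomialHom (z w : ℂ) (hz : z ≠ 0) (hw : w ≠ 0) :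
    Multiplicative (ℤ × ℤ) →* ℂ where
  toFun a := z ^ a.toAdd.1 * w ^ a.toAdd.2
  map_one' := by simp
  map_mul' a b := by
    simp only [toAdd_mul, Prod.fst_add, Prod.snd_add, zpow_add₀ hz, zpow_add₀ hw]
    ring

theorem laurentEval2_eq_lift (q : AddMonoidAlgebra ℝ (ℤ × ℤ)) {z w : ℂ} (hz : z ≠ 0)
    (hw : w ≠ 0) :
    laurentEval2 q z w = AddMonoidAlgebra.lift ℝ ℂ (ℤ × ℤ) (monomialHom z w hz hw) q := by
  rw [AddMonoidAlgebra.lift_apply]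
  refine Finsupp.sum_congr fun a _ => ?_
  simp [monomialHom, real_smul, mul_assoc]

theorem laurentEval2_pow (q : AddMonoidAlgebra ℝ (ℤ × ℤ)) (n : ℕ) {z w : ℂ} (hz : z ≠ 0)
    (hw : w ≠ 0) : laurentEval2 (q ^ n) z w = laurentEval2 q z w ^ n := by
  rw [laurentEval2_eq_lift _ hz hw, laurentEval2_eq_lift _ hz hw, map_pow]

theorem laurentEval2_eq_sum (q : AddMonoidAlgebra ℝ (ℤ × ℤ)) (z w : ℂ) :
    laurentEval2 q z w = ∑ a ∈ q.coeff.support, (q.coeff a : ℂ) * (z ^ a.1 * w ^ a.2) := by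
  simp only [laurentEval2, Finsupp.sum, mul_assoc]

theorem laurentEval2_one_one (q : AddMonoidAlgebra ℝ (ℤ × ℤ)) :
    laurentEval2 q 1 1 = ((q.coeff.sum fun _ c => c : ℝ) : ℂ) := by
  simp [laurentEval2_eq_sum, Finsupp.sum]

theorem norm_laurentEval2_le {p : AddMonoidAlgebra ℝ (ℤ × ℤ)}
    (hpos : ∀ a, 0 ≤ Finsupp.toFun p.coeff a) {z w : ℂ} (hz : ‖z‖ = 1) (hw : ‖w‖ = 1) :
    ‖laurentEval2 p z w‖ ≤ (laurentEval2 p 1 1).re := by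
  rw [laurentEval2_one_one, ofReal_re, laurentEval2_eq_sum, Finsupp.sum]
  refine (norm_sum_le _ _).trans (Finset.sum_le_sum fun a _ => ?_)
  simp only [norm_mul, norm_real, norm_zpow, hz, hw, one_zpow, mul_one, Real.norm_eq_abs]
  exact (abs_of_nonneg (hpos a)).le

theorem laurentEval2_one_one_re_nonneg {p : AddMonoidAlgebra ℝ (ℤ × ℤ)}
    (hpos : ∀ a, 0 ≤ Finsupp.toFun p.coeff a) : 0 ≤ (laurentEval2 p 1 1).re :=
  (norm_nonneg _).trans (norm_laurentEval2_le hpos norm_one norm_one)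

theorem constTerm_one : constTerm (1 : AddMonoidAlgebra ℝ (ℤ × ℤ)) = 1 := by
  simp only [constTerm, AddMonoidAlgebra.one_def]
  exact Finsupp.single_eq_same

noncomputable def circleExp (θ : ℝ) : ℂ := exp (2 * Real.pi * I * θ)

theorem circleExp_ne_zero (θ : ℝ) : circleExp θ ≠ 0 := exp_ne_zero _

theorem continuous_circleExp : Continuous circleExp := by
  unfold circleExp; fun_prop

theorem norm_circleExp (θ : ℝ) : ‖circleExp θ‖ = 1 := by
  rw [circleExp, norm_exp]; simp

theorem integral_circleExp_zpow (a : ℤ) :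
    ∫ θ in Set.Ioc (0 : ℝ) 1, circleExp θ ^ a = if a = 0 then 1 else 0 := by
  rw [← intervalIntegral.integral_of_le zero_le_one]
  have hexp : ∀ θ : ℝ, circleExp θ ^ a = exp ((a * (2 * Real.pi * I)) * θ) := fun θ => by
    rw [circleExp, ← exp_int_mul, ← mul_assoc]
  simp_rw [hexp]
  split_ifs with ha
  · simp [ha]
  · rw [integral_exp_mul_complex (by simp [Real.pi_ne_zero, ha, I_ne_zero])]
    simp [exp_int_mul_two_pi_mul_I]

def unitSquare : Set (ℝ × ℝ) := Set.Ioc 0 1 ×ˢ Set.Ioc 0 1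

instance : IsProbabilityMeasure (volume.restrict unitSquare) :=
  ⟨by simp [unitSquare, Measure.volume_eq_prod, Measure.prod_prod]⟩

theorem Continuous.integrableOn_unitSquare {E : Type*} [NormedAddCommGroup E] {f : ℝ × ℝ → E}
    (hf : Continuous f) : IntegrableOn f unitSquare :=
  (hf.continuousOn.integrableOn_compact (isCompact_Icc.prod isCompact_Icc)).mono_set
    (Set.prod_mono Set.Ioc_subset_Icc_self Set.Ioc_subset_Icc_self)

theorem integral_unitSquare_monomial (a : ℤ × ℤ) :
    ∫ θ in unitSquare, circleExp θ.1 ^ a.1 * circleExp θ.2 ^ a.2 = if a = 0 then 1 else 0 := by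
  rw [unitSquare, Measure.volume_eq_prod,
    setIntegral_prod_mul (fun θ => circleExp θ ^ a.1) (fun θ => circleExp θ ^ a.2),
    integral_circleExp_zpow, integral_circleExp_zpow]
  obtain ⟨a₁, a₂⟩ := a
  by_cases h₁ : a₁ = 0 <;> by_cases h₂ : a₂ = 0 <;> simp [h₁, h₂]

theorem continuous_circleExp_monomial (a : ℤ × ℤ) :
    Continuous fun θ : ℝ × ℝ => circleExp θ.1 ^ a.1 * circleExp θ.2 ^ a.2 :=
  ((continuous_circleExp.comp continuous_fst).zpow₀ _ fun _ => .inl (circleExp_ne_zero _)).mul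
    ((continuous_circleExp.comp continuous_snd).zpow₀ _ fun _ => .inl (circleExp_ne_zero _))

theorem continuous_laurentEval2_circleExp (q : AddMonoidAlgebra ℝ (ℤ × ℤ)) :
    Continuous fun θ : ℝ × ℝ => laurentEval2 q (circleExp θ.1) (circleExp θ.2) := by
  simp only [laurentEval2_eq_sum]
  exact continuous_finsetSum _ fun a _ => continuous_const.mul (continuous_circleExp_monomial a)

theorem integral_laurentEval2_circleExp (q : AddMonoidAlgebra ℝ (ℤ × ℤ)) :
    ∫ θ in unitSquare, laurentEval2 q (circleExp θ.1) (circleExp θ.2) = constTerm q := by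
  have hint (a : ℤ × ℤ) : IntegrableOn
      (fun θ : ℝ × ℝ => (q.coeff a : ℂ) * (circleExp θ.1 ^ a.1 * circleExp θ.2 ^ a.2))
      unitSquare := (continuous_const.mul (continuous_circleExp_monomial a)).integrableOn_unitSquare
  simp only [laurentEval2_eq_sum]
  rw [integral_finsetSum _ fun a _ => hint a]
  simp only [integral_const_mul, integral_unitSquare_monomial, mul_ite, mul_one, mul_zero,
    Finset.sum_ite_eq', Finsupp.mem_support_iff]
  show _ = ((q.coeff 0 : ℝ) : ℂ)
  split_ifs with h
  · rfl
  · simp [not_not.mp h]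

theorem abs_constTerm_pow_le {p : AddMonoidAlgebra ℝ (ℤ × ℤ)}
    (hpos : ∀ a, 0 ≤ Finsupp.toFun p.coeff a) (n : ℕ) :
    |constTerm (p ^ n)| ≤ (laurentEval2 p 1 1).re ^ n := by
  rw [← Real.norm_eq_abs, ← norm_real, ← integral_laurentEval2_circleExp]
  refine (norm_integral_le_of_norm_le_const (.of_forall fun θ => ?_)).trans_eq
    (by rw [probReal_univ, mul_one])
  rw [laurentEval2_pow _ _ (circleExp_ne_zero _) (circleExp_ne_zero _), norm_pow]
  exact pow_le_pow_left₀ (norm_nonneg _)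
    (norm_laurentEval2_le hpos (norm_circleExp _) (norm_circleExp _)) n

theorem summable_constTerm_pow_div {p : AddMonoidAlgebra ℝ (ℤ × ℤ)}
    (hpos : ∀ a, 0 ≤ Finsupp.toFun p.coeff a) {k : ℝ} (hk : (laurentEval2 p 1 1).re < k) :
    Summable fun n : ℕ => constTerm (p ^ n) / k ^ n := by
  have hS0 := laurentEval2_one_one_re_nonneg hpos
  have hk0 : 0 < k := hS0.trans_lt hk
  refine .of_norm_bounded (summable_geometric_of_lt_one (div_nonneg hS0 hk0.le)
    ((div_lt_one hk0).2 hk)) fun n => ?_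
  rw [Real.norm_eq_abs, abs_div, abs_of_pos (pow_pos hk0 n), div_pow]
  exact div_le_div_of_nonneg_right (abs_constTerm_pow_le hpos n) (pow_pos hk0 n).le

theorem hasSum_log_norm_one_sub {z : ℂ} (hz : ‖z‖ < 1) :
    HasSum (fun n : ℕ => -(z ^ (n + 1) / (n + 1)).re) (Real.log ‖1 - z‖) := by
  have h := ((hasSum_taylorSeries_neg_log hz).mapL reCLM).neg
  rw [← hasSum_nat_add_iff' 1] at h
  simpa [log_re] using h

theorem norm_pow_succ_div_le {z : ℂ} {ρ : ℝ} (hz : ‖z‖ ≤ ρ) (hρ : ρ ≤ 1) (n : ℕ) :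
    ‖z ^ (n + 1) / (n + 1)‖ ≤ ρ ^ n := by
  have hρ0 : 0 ≤ ρ := (norm_nonneg z).trans hz
  calc ‖z ^ (n + 1) / (n + 1)‖ = ‖z‖ ^ (n + 1) / (n + 1) := by
        rw [norm_div, norm_pow, ← Nat.cast_succ, norm_natCast, Nat.cast_succ]
    _ ≤ ‖z‖ ^ (n + 1) := div_le_self (by positivity) (by linarith [n.cast_nonneg (α := ℝ)])
    _ ≤ ρ ^ (n + 1) := pow_le_pow_left₀ (norm_nonneg z) hz _
    _ ≤ ρ ^ n := pow_le_pow_of_le_one hρ0 hρ n.le_succ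

section LogSeries

variable {X : Type*} [MeasurableSpace X] {μ : Measure X} [IsFiniteMeasure μ] {u : X → ℂ} {ρ : ℝ}

theorem integrable_log_norm_one_sub (hu : AEStronglyMeasurable u μ) (hρ : ρ < 1)
    (hb : ∀ x, ‖u x‖ ≤ ρ) : Integrable (fun x => Real.log ‖1 - u x‖) μ := by
  refine .of_bound ?_ (1 - ρ)⁻¹ (.of_forall fun x => ?_)
  · exact (Real.measurable_log.comp_aemeasurable
      (aestronglyMeasurable_const.sub hu).norm.aemeasurable).aestronglyMeasurable
  · have hρ0 : 0 ≤ ρ := (norm_nonneg _).trans (hb x)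
    rw [← (hasSum_log_norm_one_sub ((hb x).trans_lt hρ)).tsum_eq]
    exact tsum_of_norm_bounded (hasSum_geometric_of_lt_one hρ0 hρ) fun n => by
      rw [norm_neg]; exact (abs_re_le_norm _).trans (norm_pow_succ_div_le (hb x) hρ.le n)

theorem hasSum_integral_log_norm_one_sub (hu : AEStronglyMeasurable u μ) (hρ0 : 0 ≤ ρ)
    (hρ1 : ρ < 1) (hb : ∀ x, ‖u x‖ ≤ ρ) :
    HasSum (fun n : ℕ => -((∫ x, u x ^ (n + 1) ∂μ) / (n + 1)).re)
      (∫ x, Real.log ‖1 - u x‖ ∂μ) := by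
  set F : ℕ → X → ℝ := fun n x => -(u x ^ (n + 1) / (n + 1)).re
  have hF_bound (n : ℕ) (x : X) : ‖F n x‖ ≤ ρ ^ n := by
    rw [norm_neg]; exact (abs_re_le_norm _).trans (norm_pow_succ_div_le (hb x) hρ1.le n)
  have hpow (n : ℕ) : Integrable (fun x => u x ^ (n + 1) / (n + 1)) μ :=
    .of_bound (by fun_prop) (ρ ^ n) (.of_forall fun x => norm_pow_succ_div_le (hb x) hρ1.le n)
  have hF (n : ℕ) : Integrable (F n) μ := (hpow n).re.neg
  have hF_integral (n : ℕ) : ∫ x, F n x ∂μ = -((∫ x, u x ^ (n + 1) ∂μ) / (n + 1)).re := by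
    rw [integral_neg, ← integral_div, ← RCLike.re_to_complex, ← integral_re (hpow n)]
    rfl
  have hlog : ∫ x, Real.log ‖1 - u x‖ ∂μ = ∫ x, ∑' n, F n x ∂μ :=
    integral_congr_ae (.of_forall fun x =>
      (hasSum_log_norm_one_sub ((hb x).trans_lt hρ1)).tsum_eq.symm)
  simp_rw [hlog, ← hF_integral]
  refine hasSum_integral_of_summable_integral_norm hF ?_
  refine .of_nonneg_of_le (fun n => integral_nonneg fun x => norm_nonneg _) (fun n => ?_)
    ((summable_geometric_of_lt_one hρ0 hρ1).mul_right (μ.real Set.univ))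
  calc ∫ x, ‖F n x‖ ∂μ ≤ ∫ _, ρ ^ n ∂μ :=
        integral_mono (hF n).norm (integrable_const _) (hF_bound n)
    _ = ρ ^ n * μ.real Set.univ := by rw [integral_const, smul_eq_mul, mul_comm]

end LogSeries

theorem log_norm_ofReal_sub {x : ℝ} (hx : 0 < x) {z : ℂ} (hz : ‖z‖ < x) :
    Real.log ‖(x : ℂ) - z‖ = Real.log x + Real.log ‖1 - (x⁻¹ : ℝ) * z‖ := by
  have hsmall : ‖((x⁻¹ : ℝ) : ℂ) * z‖ < 1 := by
    rw [norm_mul, norm_real, Real.norm_of_nonneg (inv_nonneg.2 hx.le), inv_mul_lt_one₀ hx]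
    exact hz
  have hne : ‖1 - ((x⁻¹ : ℝ) : ℂ) * z‖ ≠ 0 := by
    refine norm_ne_zero_iff.2 (sub_ne_zero.2 fun h => ?_)
    rw [← h, norm_one] at hsmall
    exact lt_irrefl _ hsmall
  have hfactor : (x : ℂ) - z = x * (1 - ((x⁻¹ : ℝ) : ℂ) * z) := by
    push_cast
    field_simp [ofReal_ne_zero.2 hx.ne']
  rw [hfactor, norm_mul, norm_real, Real.norm_of_nonneg hx.le, Real.log_mul hx.ne' hne]

theorem mahlerMeasure2_exp_sub_laurentEval2 {p : AddMonoidAlgebra ℝ (ℤ × ℤ)}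
    (hpos : ∀ a, 0 ≤ Finsupp.toFun p.coeff a) {L : ℝ} (hL : (laurentEval2 p 1 1).re < Real.exp L) :
    mahlerMeasure2 (fun z w => (Real.exp L : ℂ) - laurentEval2 p z w) =
      L - ∑' n : ℕ, constTerm (p ^ (n + 1)) * Real.exp (-L) ^ (n + 1) / (n + 1) := by
  set S := (laurentEval2 p 1 1).re
  set P : ℝ × ℝ → ℂ := fun θ => laurentEval2 p (circleExp θ.1) (circleExp θ.2)
  set u : ℝ × ℝ → ℂ := fun θ => (Real.exp (-L) : ℂ) * P θ
  have hP (θ : ℝ × ℝ) : ‖P θ‖ ≤ S :=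
    norm_laurentEval2_le hpos (norm_circleExp _) (norm_circleExp _)
  have hu (θ : ℝ × ℝ) : ‖u θ‖ ≤ S * Real.exp (-L) := by
    rw [norm_mul, norm_real, Real.norm_of_nonneg (Real.exp_pos _).le, mul_comm]
    exact mul_le_mul_of_nonneg_right (hP θ) (Real.exp_pos _).le
  have hρ0 : 0 ≤ S * Real.exp (-L) :=
    mul_nonneg (laurentEval2_one_one_re_nonneg hpos) (Real.exp_pos _).le
  have hρ1 : S * Real.exp (-L) < 1 := by
    rwa [Real.exp_neg, ← div_eq_mul_inv, div_lt_one (Real.exp_pos L)]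
  have hu_meas : AEStronglyMeasurable u (volume.restrict unitSquare) :=
    (continuous_const.mul (continuous_laurentEval2_circleExp p)).aestronglyMeasurable
  have hmoment (n : ℕ) : ∫ θ in unitSquare, u θ ^ (n + 1) =
      ((Real.exp (-L) ^ (n + 1) * constTerm (p ^ (n + 1)) : ℝ) : ℂ) := by
    simp only [u, P, mul_pow, integral_const_mul,
      ← laurentEval2_pow _ _ (circleExp_ne_zero _) (circleExp_ne_zero _),
      integral_laurentEval2_circleExp]
    push_cast
    rfl
  calc mahlerMeasure2 (fun z w => (Real.exp L : ℂ) - laurentEval2 p z w)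
      = ∫ θ in unitSquare, Real.log ‖(Real.exp L : ℂ) - P θ‖ := rfl
    _ = ∫ θ in unitSquare, (L + Real.log ‖1 - u θ‖) := by
        refine integral_congr_ae (.of_forall fun θ => ?_)
        dsimp only
        rw [log_norm_ofReal_sub (Real.exp_pos L) ((hP θ).trans_lt hL), Real.log_exp,
          ← Real.exp_neg]
    _ = L + ∫ θ in unitSquare, Real.log ‖1 - u θ‖ := by
        rw [integral_add (integrable_const L) (integrable_log_norm_one_sub hu_meas hρ1 hu),
          integral_const, probReal_univ, one_smul]
    _ = _ := by
        rw [← (hasSum_integral_log_norm_one_sub hu_meas hρ0 hρ1 hu).tsum_eq, tsum_neg,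
          ← sub_eq_add_neg]
        congr 1
        refine tsum_congr fun n => ?_
        rw [hmoment, ← Nat.cast_succ, ← ofReal_natCast, ← ofReal_div, ofReal_re, Nat.cast_succ,
          mul_comm]

theorem hasDerivAt_exp_neg_pow_succ_div (d : ℝ) (n : ℕ) (L : ℝ) :
    HasDerivAt (fun L => d * Real.exp (-L) ^ (n + 1) / (n + 1))
      (-(d * Real.exp (-L) ^ (n + 1))) L := by
  refine ((((hasDerivAt_neg L).exp).fun_pow (n + 1)).const_mul d).div_const ((n : ℝ) + 1)
    |>.congr_deriv ?_
  rw [Nat.add_sub_cancel, Nat.cast_succ]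
  field_simp
  ring

theorem hasDerivAt_tsum_exp_neg_pow_succ_div {d : ℕ → ℝ} {S L₀ : ℝ}
    (hd : ∀ n, |d n| ≤ S ^ (n + 1)) (hS : S < Real.exp L₀) :
    HasDerivAt (fun L => ∑' n : ℕ, d n * Real.exp (-L) ^ (n + 1) / (n + 1))
      (-∑' n : ℕ, d n * Real.exp (-L₀) ^ (n + 1)) L₀ := by
  have hS0 : 0 ≤ S := by simpa using (abs_nonneg _).trans (hd 0)
  obtain ⟨r, hSr, hrL₀⟩ := exists_between hS
  have hr : 0 < r := hS0.trans_lt hSr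
  have hbound (n : ℕ) (L : ℝ) (hL : L ∈ Set.Ioi (Real.log r)) :
      |d n * Real.exp (-L) ^ (n + 1)| ≤ (S / r) ^ n := by
    have hexp : Real.exp (-L) ≤ r⁻¹ := by
      rw [Real.exp_neg]
      exact inv_anti₀ hr ((Real.log_lt_iff_lt_exp hr).1 hL).le
    calc |d n * Real.exp (-L) ^ (n + 1)| ≤ S ^ (n + 1) * r⁻¹ ^ (n + 1) := by
          rw [abs_mul, abs_pow, abs_of_pos (Real.exp_pos _)]
          exact mul_le_mul (hd n) (pow_le_pow_left₀ (Real.exp_pos _).le hexp _)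
            (by positivity) (by positivity)
      _ = (S / r) ^ (n + 1) := by rw [← mul_pow, div_eq_mul_inv]
      _ ≤ (S / r) ^ n :=
          pow_le_pow_of_le_one (by positivity) ((div_le_one hr).2 hSr.le) n.le_succ
  have hL₀ : L₀ ∈ Set.Ioi (Real.log r) := (Real.log_lt_iff_lt_exp hr).2 hrL₀
  have hsummable : Summable fun n : ℕ => d n * Real.exp (-L₀) ^ (n + 1) / (n + 1) := by
    refine .of_norm_bounded (summable_geometric_of_lt_one (by positivity)
      ((div_lt_one hr).2 hSr)) fun n => ?_
    rw [Real.norm_eq_abs, abs_div, abs_of_pos (by positivity : (0 : ℝ) < n + 1)]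
    exact (div_le_self (abs_nonneg _) (by linarith [n.cast_nonneg (α := ℝ)])).trans
      (hbound n L₀ hL₀)
  rw [← tsum_neg]
  exact hasDerivAt_tsum_of_isPreconnected
    (summable_geometric_of_lt_one (by positivity) ((div_lt_one hr).2 hSr))
    isOpen_Ioi isPreconnected_Ioi (fun n L _ => hasDerivAt_exp_neg_pow_succ_div (d n) n L)
    (fun n L hL => by rw [norm_neg, Real.norm_eq_abs]; exact hbound n L hL) hL₀ hsummable hL₀

theorem mahler_flow_equation_general (p : AddMonoidAlgebra ℝ (ℤ × ℤ))
    (hpos : ∀ a, 0 ≤ Finsupp.toFun p.coeff a) (k : ℝ)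
    (hk : (laurentEval2 p 1 1).re < k) :
    HasDerivAt
      (fun L : ℝ => mahlerMeasure2 (fun z w => (Real.exp L : ℂ) - laurentEval2 p z w))
      (∑' n : ℕ, constTerm (p ^ n) / k ^ n) (Real.log k) := by
  have hk0 : 0 < k := (laurentEval2_one_one_re_nonneg hpos).trans_lt hk
  have hk_exp : (laurentEval2 p 1 1).re < Real.exp (Real.log k) := by rwa [Real.exp_log hk0]
  have hseries : (fun L : ℝ => mahlerMeasure2 (fun z w => (Real.exp L : ℂ) - laurentEval2 p z w))
      =ᶠ[nhds (Real.log k)]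
        fun L => L - ∑' n : ℕ, constTerm (p ^ (n + 1)) * Real.exp (-L) ^ (n + 1) / (n + 1) := by
    filter_upwards [(isOpen_lt continuous_const Real.continuous_exp).mem_nhds hk_exp] with L hL
    exact mahlerMeasure2_exp_sub_laurentEval2 hpos hL
  have hvalue : 1 - -∑' n : ℕ, constTerm (p ^ (n + 1)) * Real.exp (-Real.log k) ^ (n + 1) =
      ∑' n : ℕ, constTerm (p ^ n) / k ^ n := by
    rw [(summable_constTerm_pow_div hpos hk).tsum_eq_zero_add, pow_zero, constTerm_one,
      Real.exp_neg, Real.exp_log hk0]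
    simp [div_eq_mul_inv]
  have hderiv := (hasDerivAt_id' (Real.log k)).sub
    (hasDerivAt_tsum_exp_neg_pow_succ_div (fun n => abs_constTerm_pow_le hpos (n + 1)) hk_exp)
  rw [hvalue] at hderiv
  exact hderiv.congr_of_eventuallyEq hseries

/-- For `p` with non-negative coefficients and no constant term and real
`k > p(1,1)`, the derivative of `m(k − p)` with respect to `log k` is
`u₀(k) = Σ_{n≥0} k^{-n} [pⁿ]₀`. -/
theorem mahler_flow_equation (p : AddMonoidAlgebra ℝ (ℤ × ℤ))
    (hpos : ∀ a, 0 ≤ Finsupp.toFun p.coeff a) (hconst : constTerm p = 0) (k : ℝ)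
    (hk : (laurentEval2 p 1 1).re < k) :
    HasDerivAt
      (fun L : ℝ => mahlerMeasure2 (fun z w => (Real.exp L : ℂ) - laurentEval2 p z w))
      (∑' n : ℕ, constTerm (p ^ n) / k ^ n) (Real.log k) :=
  mahler_flow_equation_general p hpos k hk
end

section
/- The constant term of (z + z⁻¹ + w + w⁻¹)^{2n} as a Laurent polynomial equals Σ_{i=0}^{n} C(2n,2i)·C(2i,i)·C(2n−2i,n−i), and the constant term of (z + z⁻¹ + w + w⁻¹)^{2n−1} is zero. -/
open Finset

/-- The Laurent polynomial `z + z⁻¹ + w + w⁻¹`, as an element of the group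
algebra `ℤ[ℤ × ℤ]`. -/
noncomputable def fourTerm : AddMonoidAlgebra ℤ (ℤ × ℤ) :=
  AddMonoidAlgebra.single (1, 0) 1 + AddMonoidAlgebra.single (-1, 0) 1 +
    AddMonoidAlgebra.single (0, 1) 1 + AddMonoidAlgebra.single (0, -1) 1

/-!
Write `z + z⁻¹ + w + w⁻¹ = Z + W` with `Z = z + z⁻¹` and `W = w + w⁻¹`. The constant term of a
product of a Laurent polynomial in `z` alone and one in `w` alone is the product of their constant
terms, so the binomial theorem gives `[(Z + W)^m]₀ = Σ_k C(m,k) [Z^k]₀ [W^(m-k)]₀`. Since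
`[(z + z⁻¹)^k]₀` is `C(k, k/2)` for even `k` and `0` for odd `k`, only even `k` contribute when
`m = 2n`, and every term vanishes when `m` is odd.
-/

theorem Finset.sum_range_two_mul_add_one_of_odd_eq_zero {M : Type*} [AddCommMonoid M]
    (f : ℕ → M) (hf : ∀ i, f (2 * i + 1) = 0) (n : ℕ) :
    ∑ k ∈ range (2 * n + 1), f k = ∑ i ∈ range (n + 1), f (2 * i) := by
  induction n with
  | zero => simp
  | succ n ih =>
    rw [show 2 * (n + 1) + 1 = 2 * n + 1 + 1 + 1 by ring, sum_range_succ, sum_range_succ, ih,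
      hf, add_zero, sum_range_succ _ (n + 1), mul_add_one]

namespace AddMonoidAlgebra

variable {R M N : Type*}

theorem mapDomain_pow [Semiring R] [AddMonoid M] [AddMonoid N] (φ : M →+ N)
    (f : AddMonoidAlgebra R M) (k : ℕ) : mapDomain φ f ^ k = mapDomain φ (f ^ k) :=
  (map_pow (mapDomainRingHom R φ) f k).symm

theorem coeff_mapDomain_inl_mul_mapDomain_inr [Semiring R] [AddZeroClass M] [AddZeroClass N]
    (f : AddMonoidAlgebra R M) (g : AddMonoidAlgebra R N) (a : M) (b : N) :
    (mapDomain (AddMonoidHom.inl M N) f * mapDomain (AddMonoidHom.inr M N) g).coeff (a, b) =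
      f.coeff a * g.coeff b := by
  classical
  induction f using induction_linear with
  | zero => simp only [mapDomain_zero, zero_mul, coeff_zero, Finsupp.coe_zero, Pi.zero_apply]
  | add f₁ f₂ h₁ h₂ =>
    simp only [mapDomain_add, add_mul, coeff_add, Finsupp.add_apply, h₁, h₂]
  | single m r =>
    induction g using induction_linear with
    | zero => simp only [mapDomain_zero, mul_zero, coeff_zero, Finsupp.coe_zero, Pi.zero_apply]
    | add g₁ g₂ h₁ h₂ =>
      simp only [mapDomain_add, mul_add, coeff_add, Finsupp.add_apply, h₁, h₂]
    | single m' r' =>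
      simp only [mapDomain_single, AddMonoidHom.inl_apply, AddMonoidHom.inr_apply,
        single_mul_single, Prod.mk_add_mk, add_zero, zero_add, coeff_single, Finsupp.single_apply,
        Prod.mk.injEq, ite_and]
      split_ifs <;> simp

theorem coeff_mapDomain_inl_add_mapDomain_inr_pow [CommSemiring R] [AddCommMonoid M]
    [AddCommMonoid N] (f : AddMonoidAlgebra R M) (g : AddMonoidAlgebra R N) (m : ℕ)
    (a : M) (b : N) :
    ((mapDomain (AddMonoidHom.inl M N) f + mapDomain (AddMonoidHom.inr M N) g) ^ m).coeff (a, b) =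
      ∑ k ∈ range (m + 1), (m.choose k : R) * (f ^ k).coeff a * (g ^ (m - k)).coeff b := by
  rw [add_pow, coeff_sum, Finsupp.finsetSum_apply]
  refine sum_congr rfl fun k _ => ?_
  rw [← Nat.cast_comm, natCast_def, coeff_single_zero_mul, mapDomain_pow, mapDomain_pow,
    coeff_mapDomain_inl_mul_mapDomain_inr, mul_assoc]

end AddMonoidAlgebra

namespace LaurentPolynomial

open AddMonoidAlgebra

variable {R : Type*} [CommSemiring R]

theorem coeff_T_one_add_T_neg_one_pow (k : ℕ) (d : ℤ) :
    ((T 1 + T (-1) : R[T;T⁻¹]) ^ k).coeff d =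
      ∑ j ∈ range (k + 1), if 2 * (j : ℤ) - k = d then (k.choose j : R) else 0 := by
  classical
  rw [add_pow, coeff_sum, Finsupp.finsetSum_apply]
  refine sum_congr rfl fun j hj => ?_
  have hjk : j ≤ k := Nat.lt_succ_iff.mp (mem_range.mp hj)
  rw [T_pow, T_pow, ← T_add, ← Nat.cast_comm, natCast_def, coeff_single_zero_mul, T, coeff_single,
    Finsupp.single_apply, mul_ite, mul_zero, Nat.cast_sub hjk,
    show (j : ℤ) * 1 + (k - j) * -1 = 2 * j - k by ring, mul_one]

theorem coeff_zero_T_one_add_T_neg_one_pow_two_mul (i : ℕ) :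
    ((T 1 + T (-1) : R[T;T⁻¹]) ^ (2 * i)).coeff 0 = ((2 * i).choose i : R) := by
  rw [coeff_T_one_add_T_neg_one_pow, sum_eq_single i]
  · rw [if_pos (by push_cast; ring)]
  · intro j _ hji
    rw [if_neg (by omega)]
  · intro hi
    exact absurd (mem_range.mpr (by omega)) hi

theorem coeff_zero_T_one_add_T_neg_one_pow_two_mul_add_one (i : ℕ) :
    ((T 1 + T (-1) : R[T;T⁻¹]) ^ (2 * i + 1)).coeff 0 = 0 := by
  rw [coeff_T_one_add_T_neg_one_pow]
  exact sum_eq_zero fun j _ => if_neg (by omega)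

end LaurentPolynomial

open AddMonoidAlgebra LaurentPolynomial

theorem fourTerm_eq :
    fourTerm = mapDomain (AddMonoidHom.inl ℤ ℤ) (T 1 + T (-1) : ℤ[T;T⁻¹]) +
      mapDomain (AddMonoidHom.inr ℤ ℤ) (T 1 + T (-1) : ℤ[T;T⁻¹]) := by
  simp only [fourTerm, T, mapDomain_add, mapDomain_single, AddMonoidHom.inl_apply,
    AddMonoidHom.inr_apply, add_assoc]

/-- The constant term of `(z + z⁻¹ + w + w⁻¹)^{2n}` equals
`Σ_{i=0}^{n} C(2n,2i)·C(2i,i)·C(2n−2i,n−i)`, and the constant term of odd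
powers vanishes. -/
theorem fourTerm_constant_term (n : ℕ) :
    Finsupp.toFun (fourTerm ^ (2 * n)).coeff 0 =
      ∑ i ∈ range (n + 1),
        ((2 * n).choose (2 * i) * (2 * i).choose i *
          (2 * n - 2 * i).choose (n - i) : ℤ) ∧
    Finsupp.toFun (fourTerm ^ (2 * n + 1)).coeff 0 = 0 := by
  have expand (m : ℕ) := fourTerm_eq ▸
    coeff_mapDomain_inl_add_mapDomain_inr_pow (T 1 + T (-1) : ℤ[T;T⁻¹]) (T 1 + T (-1)) m 0 0
  refine ⟨(expand (2 * n)).trans ?_, (expand (2 * n + 1)).trans ?_⟩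
  · rw [sum_range_two_mul_add_one_of_odd_eq_zero _
      fun i => by rw [coeff_zero_T_one_add_T_neg_one_pow_two_mul_add_one, mul_zero, zero_mul]]
    refine sum_congr rfl fun i _ => ?_
    rw [← Nat.mul_sub, coeff_zero_T_one_add_T_neg_one_pow_two_mul,
      coeff_zero_T_one_add_T_neg_one_pow_two_mul]
  · refine sum_eq_zero fun k hk => ?_
    obtain ⟨i, rfl | rfl⟩ := Nat.even_or_odd' k
    · rw [show 2 * n + 1 - 2 * i = 2 * (n - i) + 1 by have := mem_range.mp hk; omega,
        coeff_zero_T_one_add_T_neg_one_pow_two_mul_add_one, mul_zero]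
    · rw [coeff_zero_T_one_add_T_neg_one_pow_two_mul_add_one, mul_zero, zero_mul]
end
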